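/- Let A₀ = V₀Λ₀W₀ᴴ with W₀ᴴV₀ = I, Λ₀ diagonal with distinct eigenvalues, and let Λ₁ = Diag(W₀ᴴA₁V₀). Then V₁ := −V₀ (Π^{†∘} ∘ (W₀ᴴA₁V₀)) solves the Sylvester equation A₀V₁ − V₁Λ₀ = V₀Λ₁ − A₁V₀, where Π^{†∘} has entries 1/(λᵢ − λⱼ) for i ≠ j and 0 on the diagonal. -/

import Mathlib

/-!
Conjugating by `V₀` (with `W₀ᴴ = V₀⁻¹`) turns the Sylvester equation into
`Λ₀ X - X Λ₀ = Λ₁ - W₀ᴴ A₁ V₀` for `V₁ = V₀ X`. Since `Λ₀` is diagonal, the commutator acts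
entrywise as multiplication by `λⱼ - λᵢ`, so dividing the off-diagonal entries of the right-hand
side by `λⱼ - λᵢ` solves it; the diagonal of the right-hand side vanishes by the choice of `Λ₁`.
-/

open Matrix

theorem mul_sub_mul_of_eq_conj {R : Type*} [Ring R] {V W D A : R} (hWV : W * V = 1)
    (hA : A = V * D * W) (X : R) :
    A * (V * X) - V * X * D = V * (D * X - X * D) := by
  subst hA
  calc V * D * W * (V * X) - V * X * D = V * D * (W * V) * X - V * X * D := by noncomm_ring
    _ = V * (D * X - X * D) := by rw [hWV, mul_one]; noncomm_ring

theorem hadamard_inv_sub_mul_diagonal_sub_diagonal_mul {ι K : Type*} [Fintype ι] [DecidableEq ι]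
    [Field K] {l : ι → K} (hl : Function.Injective l) (M : Matrix ι ι K) :
    (of fun i j => if i = j then 0 else (l i - l j)⁻¹) ⊙ M * diagonal l -
      diagonal l * ((of fun i j => if i = j then 0 else (l i - l j)⁻¹) ⊙ M) =
      diagonal (fun i => M i i) - M := by
  ext i j
  simp only [Matrix.sub_apply, mul_diagonal, diagonal_mul, diagonal_apply, hadamard_apply, of_apply]
  rcases eq_or_ne i j with rfl | hij
  · simp
  · have hsub : l i - l j ≠ 0 := sub_ne_zero.mpr (hl.ne hij)
    simp only [if_neg hij]
    field_simp
    ring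

theorem stmt_10 {n : ℕ} (V₀ W₀ A₁ : Matrix (Fin n) (Fin n) ℂ) (l : Fin n → ℂ)
    (hWV : W₀ᴴ * V₀ = 1) (hl : Function.Injective l)
    (Λ₀ A₀ Λ₁ Pid V₁ : Matrix (Fin n) (Fin n) ℂ)
    (hΛ₀ : Λ₀ = Matrix.diagonal l)
    (hA₀ : A₀ = V₀ * Λ₀ * W₀ᴴ)
    (hΛ₁ : Λ₁ = Matrix.diagonal (fun i => (W₀ᴴ * A₁ * V₀) i i))
    (hPi : Pid = Matrix.of fun i j => if i = j then 0 else (l i - l j)⁻¹)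
    (hV₁ : V₁ = -(V₀ * Matrix.hadamard Pid (W₀ᴴ * A₁ * V₀))) :
    A₀ * V₁ - V₁ * Λ₀ = V₀ * Λ₁ - A₁ * V₀ := by
  set H := Pid ⊙ (W₀ᴴ * A₁ * V₀)
  have hVW : V₀ * W₀ᴴ = 1 := mul_eq_one_comm.mp hWV
  have hcomm : H * Λ₀ - Λ₀ * H = Λ₁ - W₀ᴴ * A₁ * V₀ := by
    subst hΛ₀ hΛ₁ hPi
    exact hadamard_inv_sub_mul_diagonal_sub_diagonal_mul hl _
  have hA₁V₀ : A₁ * V₀ = V₀ * (W₀ᴴ * A₁ * V₀) := by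
    rw [← mul_assoc, ← mul_assoc, hVW, one_mul]
  rw [hV₁, ← mul_neg, mul_sub_mul_of_eq_conj hWV hA₀, hA₁V₀, ← mul_sub]
  congr 1
  rw [← hcomm]
  noncomm_ring
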